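/- Let (X, μ) be a probability space with tree structure 𝒯, let 1 < q < p, and let φ ≥ 0 in L^p(X, μ) with ∫_X φ dμ = f, ∫_X φ^q dμ = A, ∫_X φ^p dμ = F, and suppose ∫_X (ℳ_𝒯 φ)^p dμ < ∞. Then ∫_X (ℳ_𝒯 φ)^p dμ ≤ F · (h^{−1}((p f^{p−q} A − (p−q) f^p)/F))^p, where h : [1, ∞) → (−∞, q], h(t) = p t^{p−q} − (p−q) t^p, is strictly decreasing with inverse h^{−1}. -/

import Mathlib

open MeasureTheory Set Filter

/-- A tree structure on a probability space `(X, μ)` in the sense of Definition 2.1: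
`𝒯 = ⋃ₘ 𝒯₍ₘ₎` with `𝒯₍₀₎ = {X}`, each `I ∈ 𝒯` split into at least two pairwise almost
disjoint children covering `I`, all elements measurable of positive measure, and
`sup_{I ∈ 𝒯₍ₘ₎} μ(I) → 0`. -/
structure TreeStruct {X : Type*} [MeasurableSpace X] (μ : Measure X) where
  level : ℕ → Set (Set X)
  child : Set X → Set (Set X)
  level_zero : level 0 = {Set.univ}
  level_succ : ∀ m, level (m + 1) = ⋃ I ∈ level m, child I
  mem_meas : ∀ m, ∀ I ∈ level m, MeasurableSet I
  mem_pos : ∀ m, ∀ I ∈ level m, 0 < μ I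
  child_countable : ∀ I, (child I).Countable
  child_nontrivial : ∀ m, ∀ I ∈ level m, ∃ J ∈ child I, ∃ K ∈ child I, J ≠ K
  child_subset : ∀ m, ∀ I ∈ level m, ∀ J ∈ child I, J ⊆ I
  child_almost_disjoint :
    ∀ m, ∀ I ∈ level m, ∀ J ∈ child I, ∀ K ∈ child I, J ≠ K → μ (J ∩ K) = 0
  child_cover : ∀ m, ∀ I ∈ level m, I = ⋃₀ child I
  level_small : Tendsto (fun m => ⨆ I ∈ level m, μ I) atTop (nhds 0)

/-- Membership in the tree: `I ∈ 𝒯` iff it belongs to some level. -/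
def TreeStruct.Mem {X : Type*} [MeasurableSpace X] {μ : Measure X}
    (T : TreeStruct μ) (I : Set X) : Prop := ∃ m, I ∈ T.level m

/-- The maximal operator associated to the tree `𝒯`:
`ℳ_𝒯 φ(x) = sup { (1/μ(I)) ∫_I |φ| dμ : x ∈ I ∈ 𝒯 }`. -/
noncomputable def maxOp {X : Type*} [MeasurableSpace X] {μ : Measure X}
    (T : TreeStruct μ) (φ : X → ℝ) (x : X) : ℝ :=
  sSup ((fun I => (∫ y in I, |φ y| ∂μ) / (μ I).toReal) '' {I | T.Mem I ∧ x ∈ I})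

/-!
Put `m = max (ℳ_𝒯 φ) f`. Hölder's inequality on a single `I ∈ 𝒯` gives `s^q μ(I) ≤ ∫_I φ^q`
whenever the average of `φ` over `I` exceeds `s`, and any family of elements of `𝒯` has an almost
disjoint subfamily with the same union. Hence the weak type estimate `s^q μ{m > s} ≤ ∫_{m > s} φ^q`
holds for `s > f`. Integrating it against `s^(p-q-1) ds` over `(f, ∞)` (layer cake) yields
`(p - q) ∫ m^p + p f^(p-q) A ≤ (p - q) f^p + p ∫ φ^q m^(p-q)`, and Hölder bounds the last integral
by `F^(q/p) (∫ m^p)^((p-q)/p)`. Writing `∫ m^p = F s^p` this says `h(t) ≤ h(s)`, so `s ≤ t` since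
`h` is decreasing on `[1, ∞)`.
-/

open scoped ENNReal

namespace TreeStruct

variable {X : Type*} [MeasurableSpace X] {μ : Measure X} (T : TreeStruct μ)

theorem countable_level (m : ℕ) : (T.level m).Countable := by
  induction m with
  | zero => simp [T.level_zero]
  | succ n ih => rw [T.level_succ]; exact ih.biUnion fun I _ => T.child_countable I

theorem countable_setOf_mem : {I | T.Mem I}.Countable := by
  simpa [TreeStruct.Mem, ofPred_exists] using countable_iUnion T.countable_level

theorem mem_univ : T.Mem univ := ⟨0, by simp [T.level_zero]⟩

variable {T}

theorem Mem.measurableSet {I : Set X} (h : T.Mem I) : MeasurableSet I :=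
  let ⟨m, hm⟩ := h; T.mem_meas m I hm

theorem exists_parent {n : ℕ} {I : Set X} (h : I ∈ T.level (n + 1)) :
    ∃ P ∈ T.level n, I ∈ T.child P ∧ I ⊆ P := by
  rw [T.level_succ, mem_iUnion₂] at h
  obtain ⟨P, hP, hIP⟩ := h
  exact ⟨P, hP, hIP, T.child_subset n P hP I hIP⟩

theorem aedisjoint_of_mem_level {m : ℕ} {I J : Set X} (hI : I ∈ T.level m) (hJ : J ∈ T.level m)
    (hIJ : I ≠ J) : AEDisjoint μ I J := by
  induction m generalizing I J with
  | zero =>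
    simp only [T.level_zero, mem_singleton_iff] at hI hJ
    exact absurd (hI.trans hJ.symm) hIJ
  | succ n ih =>
    obtain ⟨P, hP, hIP, hIsub⟩ := exists_parent hI
    obtain ⟨Q, hQ, hJQ, hJsub⟩ := exists_parent hJ
    by_cases hPQ : P = Q
    · subst hPQ; exact T.child_almost_disjoint n P hP I hIP J hJQ hIJ
    · exact (ih hP hQ hPQ).mono hIsub hJsub

theorem subset_or_aedisjoint_of_le {m n : ℕ} (hmn : m ≤ n) {I J : Set X} (hI : I ∈ T.level m)
    (hJ : J ∈ T.level n) : J ⊆ I ∨ AEDisjoint μ I J := by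
  induction n, hmn using Nat.le_induction generalizing J with
  | base =>
    by_cases h : J = I
    · exact Or.inl h.le
    · exact Or.inr (aedisjoint_of_mem_level hI hJ (Ne.symm h))
  | succ n _ ih =>
    obtain ⟨P, hP, -, hJP⟩ := exists_parent hJ
    exact (ih hP).imp hJP.trans fun h => h.mono subset_rfl hJP

-- Witness: the elements of `S` not contained in an element of `S` of lower level.
theorem exists_pairwise_aedisjoint_subset (S : Set (Set X)) (hS : ∀ I ∈ S, T.Mem I) :
    ∃ S' ⊆ S, ⋃₀ S' = ⋃₀ S ∧ S'.Pairwise (AEDisjoint μ) := by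
  classical
  set S' := {K ∈ S | ∃ m, K ∈ T.level m ∧ ∀ k < m, ∀ K' ∈ T.level k, K' ∈ S → ¬K ⊆ K'}
  refine ⟨S', fun K hK => hK.1, (sUnion_mono fun K hK => hK.1).antisymm ?_, ?_⟩
  · rintro x ⟨I, hIS, hxI⟩
    have hex : ∃ m, ∃ K ∈ T.level m, K ∈ S ∧ I ⊆ K :=
      (hS I hIS).imp fun n hn => ⟨I, hn, hIS, subset_rfl⟩
    obtain ⟨K, hK, hKS, hIK⟩ := Nat.find_spec hex
    refine ⟨K, ⟨hKS, Nat.find hex, hK, fun k hk K' hK' hK'S hKK' => ?_⟩, hIK hxI⟩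
    exact Nat.find_min hex hk ⟨K', hK', hK'S, hIK.trans hKK'⟩
  · rintro K ⟨hKS, m, hK, hKmin⟩ K' ⟨hK'S, m', hK', hK'min⟩ hne
    wlog hmm' : m ≤ m' generalizing K K' m m'
    · exact (this hK'S m' hK' hK'min hKS m hK hKmin hne.symm (le_of_not_ge hmm')).symm
    rcases subset_or_aedisjoint_of_le hmm' hK hK' with hsub | hdisj
    · rcases hmm'.lt_or_eq with hlt | rfl
      · exact absurd hsub (hK'min m hlt K hK hKS)
      · exact aedisjoint_of_mem_level hK hK' hne
    · exact hdisj

theorem mul_measure_sUnion_le {ν : Measure X} (hνμ : ν ≪ μ) {c : ℝ≥0∞} {S : Set (Set X)}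
    (hS : ∀ I ∈ S, T.Mem I ∧ c * μ I ≤ ν I) : c * μ (⋃₀ S) ≤ ν (⋃₀ S) := by
  obtain ⟨S', hS'S, hU, hd⟩ := T.exists_pairwise_aedisjoint_subset S fun I hI => (hS I hI).1
  have hc : S'.Countable := T.countable_setOf_mem.mono fun I hI => (hS I (hS'S hI)).1
  have hmeas : ∀ I ∈ S', NullMeasurableSet I μ :=
    fun I hI => (hS I (hS'S hI)).1.measurableSet.nullMeasurableSet
  rw [← hU, measure_sUnion₀ hc hd hmeas,
    measure_sUnion₀ hc (hd.mono' fun _ _ h => hνμ h) fun I hI => (hmeas I hI).mono_ac hνμ,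
    ← ENNReal.tsum_mul_left]
  exact ENNReal.tsum_le_tsum fun I => (hS I (hS'S I.2)).2

end TreeStruct

section MaximalOperator

variable {X : Type*} [MeasurableSpace X] {μ : Measure X}

-- Hölder against the constant `1` for the probability measure `(μ univ)⁻¹ • μ`.
theorem rpow_laverage_le_laverage_rpow [IsFiniteMeasure μ] {g : X → ℝ≥0∞} (hg : AEMeasurable g μ)
    {q : ℝ} (hq : 1 ≤ q) : (⨍⁻ x, g x ∂μ) ^ q ≤ ⨍⁻ x, g x ^ q ∂μ := by
  rcases eq_zero_or_neZero μ with rfl | _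
  · simp [ENNReal.zero_rpow_of_pos (zero_lt_one.trans_le hq)]
  simp only [laverage_eq']
  set ν := (μ univ)⁻¹ • μ
  have hq0 : 0 < q := zero_lt_one.trans_le hq
  have holder := ENNReal.lintegral_mul_norm_pow_le ((hg.pow_const q).smul_measure (μ univ)⁻¹)
    (aemeasurable_const (b := (1 : ℝ≥0∞))) (inv_nonneg.2 hq0.le)
    (sub_nonneg.2 (inv_le_one_of_one_le₀ hq)) (add_sub_cancel _ 1)
  simp only [ENNReal.one_rpow, mul_one, ← ENNReal.rpow_mul, mul_inv_cancel₀ hq0.ne',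
    ENNReal.rpow_one, lintegral_const, measure_univ] at holder
  calc (∫⁻ x, g x ∂ν) ^ q ≤ ((∫⁻ x, g x ^ q ∂ν) ^ q⁻¹) ^ q := by gcongr
    _ = ∫⁻ x, g x ^ q ∂ν := by rw [← ENNReal.rpow_mul, inv_mul_cancel₀ hq0.ne', ENNReal.rpow_one]

/-- `ℳ_𝒯` on `ℝ≥0∞`-valued functions: an unbounded supremum is `∞` here, whereas `maxOp` gives it
the junk value `0`. -/
noncomputable def lmaxOp (T : TreeStruct μ) (g : X → ℝ≥0∞) (x : X) : ℝ≥0∞ :=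
  sSup ((fun I => ⨍⁻ y in I, g y ∂μ) '' {I | T.Mem I ∧ x ∈ I})

variable (T : TreeStruct μ)

theorem setOf_lt_lmaxOp (g : X → ℝ≥0∞) (s : ℝ≥0∞) :
    {x | s < lmaxOp T g x} = ⋃₀ {I | T.Mem I ∧ s < ⨍⁻ y in I, g y ∂μ} := by
  ext x
  simp only [lmaxOp, lt_sSup_iff, mem_image, mem_ofPred_eq, mem_sUnion]
  grind

theorem measurable_lmaxOp (g : X → ℝ≥0∞) : Measurable (lmaxOp T g) :=
  measurable_of_Ioi fun s => by
    change MeasurableSet {x | s < lmaxOp T g x}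
    rw [setOf_lt_lmaxOp]
    exact .sUnion (T.countable_setOf_mem.mono fun _ hI => hI.1) fun _ hI => hI.1.measurableSet

theorem rpow_mul_measure_lt_lmaxOp_le [IsFiniteMeasure μ] {g : X → ℝ≥0∞} (hg : AEMeasurable g μ)
    {q : ℝ} (hq : 1 ≤ q) (s : ℝ≥0∞) :
    s ^ q * μ {x | s < lmaxOp T g x} ≤
      μ.withDensity (fun x => g x ^ q) {x | s < lmaxOp T g x} := by
  rw [setOf_lt_lmaxOp]
  refine T.mul_measure_sUnion_le (withDensity_absolutelyContinuous _ _) fun I ⟨hI, hsI⟩ => ⟨hI, ?_⟩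
  rw [withDensity_apply _ hI.measurableSet, ← measure_mul_setLAverage _ (measure_ne_top μ I),
    mul_comm]
  gcongr
  calc s ^ q ≤ (⨍⁻ y in I, g y ∂μ) ^ q := by gcongr
    _ ≤ ⨍⁻ y in I, g y ^ q ∂μ := rpow_laverage_le_laverage_rpow hg.restrict hq

theorem ae_lmaxOp_lt_top [IsFiniteMeasure μ] {g : X → ℝ≥0∞} (hg : AEMeasurable g μ)
    (hg' : ∫⁻ x, g x ∂μ ≠ ∞) : ∀ᵐ x ∂μ, lmaxOp T g x < ∞ := by
  refine ae_iff.2 (by_contra fun h => ?_)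
  obtain ⟨n, hn⟩ := ENNReal.exists_nat_mul_gt h hg'
  refine hn.not_ge ?_
  calc (n : ℝ≥0∞) * μ {x | ¬lmaxOp T g x < ∞}
      ≤ (n : ℝ≥0∞) ^ (1 : ℝ) * μ {x | (n : ℝ≥0∞) < lmaxOp T g x} := by
        rw [ENNReal.rpow_one]
        exact mul_le_mul_right (measure_mono fun x (hx : ¬_ < ∞) => by simp_all) _
    _ ≤ μ.withDensity (fun x => g x ^ (1 : ℝ)) {x | (n : ℝ≥0∞) < lmaxOp T g x} :=
        rpow_mul_measure_lt_lmaxOp_le T hg le_rfl _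
    _ ≤ ∫⁻ x, g x ∂μ := by
        simpa using measure_mono (μ := μ.withDensity g) (subset_univ _)

theorem maxOp_nonneg (φ : X → ℝ) (x : X) : 0 ≤ maxOp T φ x :=
  Real.sSup_nonneg <| by rintro _ ⟨I, -, rfl⟩; positivity

variable {T}

theorem maxOp_eq_toReal_lmaxOp {φ : X → ℝ} (hφ : Integrable φ μ) (x : X) :
    maxOp T φ x = (lmaxOp T (fun y => ENNReal.ofReal |φ y|) x).toReal := by
  rw [lmaxOp, ENNReal.toReal_sSup, image_image]
  · refine congrArg sSup (image_congr fun I _ => ?_)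
    rw [setLAverage_eq, ENNReal.toReal_div,
      integral_eq_lintegral_of_nonneg_ae (.of_forall fun _ => abs_nonneg _)
        hφ.abs.aestronglyMeasurable.restrict]
  · rintro _ ⟨I, -, rfl⟩
    exact (setLAverage_lt_top (ne_top_of_le_ne_top hφ.abs.lintegral_lt_top.ne
      (setLIntegral_le_lintegral _ _))).ne

theorem measurable_maxOp {φ : X → ℝ} (hφ : Integrable φ μ) : Measurable (maxOp T φ) := by
  simpa only [funext (maxOp_eq_toReal_lmaxOp (T := T) hφ)] using
    (measurable_lmaxOp T _).ennreal_toReal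

theorem rpow_mul_measure_lt_maxOp_le [IsFiniteMeasure μ] {φ : X → ℝ} (hφ : Integrable φ μ) {q : ℝ}
    (hq : 1 ≤ q) {s : ℝ} (hs : 0 ≤ s) :
    ENNReal.ofReal s ^ q * μ {x | s < maxOp T φ x} ≤
      μ.withDensity (fun x => ENNReal.ofReal |φ x| ^ q) {x | s < maxOp T φ x} := by
  set g : X → ℝ≥0∞ := fun y => ENNReal.ofReal |φ y|
  have hg : AEMeasurable g μ := hφ.abs.aemeasurable.ennreal_ofReal
  have hae : {x | s < maxOp T φ x} =ᵐ[μ] {x | ENNReal.ofReal s < lmaxOp T g x} := by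
    refine eventuallyEq_set.2 ?_
    filter_upwards [ae_lmaxOp_lt_top T hg hφ.abs.lintegral_lt_top.ne] with x hx
    simp only [maxOp_eq_toReal_lmaxOp hφ, g, ENNReal.ofReal_lt_iff_lt_toReal hs hx.ne]
  rw [measure_congr hae, measure_congr ((withDensity_absolutelyContinuous _ _).ae_eq hae)]
  exact rpow_mul_measure_lt_lmaxOp_le T hg hq _

end MaximalOperator

section LayerCake

variable {X : Type*} [MeasurableSpace X]

theorem lintegral_Ioc_ofReal_rpow_sub_one {c r : ℝ} (hc : 0 ≤ c) (hr : 0 < r) :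
    ∫⁻ s in Ioc 0 c, ENNReal.ofReal (s ^ (r - 1)) = ENNReal.ofReal (c ^ r / r) := by
  have hint : IntegrableOn (fun s : ℝ => s ^ (r - 1)) (Ioc 0 c) := by
    rw [← intervalIntegrable_iff_integrableOn_Ioc_of_le hc]
    exact intervalIntegral.intervalIntegrable_rpow' (by linarith)
  rw [← ofReal_integral_eq_lintegral_ofReal hint
      (ae_restrict_of_forall_mem measurableSet_Ioc fun s hs => Real.rpow_nonneg hs.1.le _),
    ← intervalIntegral.integral_of_le hc, integral_rpow (.inl (by linarith)), sub_add_cancel,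
    Real.zero_rpow hr.ne', sub_zero]

theorem lintegral_ofReal_rpow_eq_add {σ : Measure X} {m : X → ℝ}
    (hm : Measurable m) {f r : ℝ} (hf : 0 ≤ f) (hfm : ∀ x, f ≤ m x) (hr : 0 < r) :
    ∫⁻ x, ENNReal.ofReal (m x ^ r) ∂σ = σ univ * ENNReal.ofReal (f ^ r) +
      ENNReal.ofReal r * ∫⁻ s in Ioi f, σ {x | s < m x} * ENNReal.ofReal (s ^ (r - 1)) := by
  rw [lintegral_rpow_eq_lintegral_meas_lt_mul σ (.of_forall fun x => hf.trans (hfm x))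
      hm.aemeasurable hr, ← Ioc_union_Ioi_eq_Ioi hf,
    lintegral_union measurableSet_Ioi (Ioc_disjoint_Ioi le_rfl), mul_add]
  congr 1
  have hbelow : ∫⁻ s in Ioc 0 f, σ {x | s < m x} * ENNReal.ofReal (s ^ (r - 1)) =
      ∫⁻ s in Ioc 0 f, σ univ * ENNReal.ofReal (s ^ (r - 1)) := by
    simp only [← setLIntegral_congr (Ioo_ae_eq_Ioc (a := (0 : ℝ)) (b := f))]
    refine setLIntegral_congr_fun measurableSet_Ioo fun s hs => ?_
    rw [show {x | s < m x} = univ from eq_univ_of_forall fun x => hs.2.trans_le (hfm x)]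
  rw [hbelow, lintegral_const_mul _ (by fun_prop), lintegral_Ioc_ofReal_rpow_sub_one hf hr,
    mul_left_comm, ← ENNReal.ofReal_mul hr.le, mul_div_cancel₀ _ hr.ne']

theorem mul_lintegral_rpow_add_le_of_weak_type {μ ν : Measure X} [IsProbabilityMeasure μ]
    {m : X → ℝ} (hm : Measurable m) {f p q : ℝ} (hf : 0 ≤ f) (hfm : ∀ x, f ≤ m x) (hp : 0 < p)
    (hqp : q < p)
    (hweak : ∀ s, f < s → ENNReal.ofReal s ^ q * μ {x | s < m x} ≤ ν {x | s < m x}) :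
    ENNReal.ofReal (p - q) * ∫⁻ x, ENNReal.ofReal (m x ^ p) ∂μ +
        ENNReal.ofReal p * (ν univ * ENNReal.ofReal (f ^ (p - q))) ≤
      ENNReal.ofReal (p - q) * ENNReal.ofReal (f ^ p) +
        ENNReal.ofReal p * ∫⁻ x, ENNReal.ofReal (m x ^ (p - q)) ∂ν := by
  have htail : ∫⁻ s in Ioi f, μ {x | s < m x} * ENNReal.ofReal (s ^ (p - 1)) ≤
      ∫⁻ s in Ioi f, ν {x | s < m x} * ENNReal.ofReal (s ^ (p - q - 1)) := by
    refine setLIntegral_mono' measurableSet_Ioi fun s (hs : f < s) => ?_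
    have hs0 : 0 < s := hf.trans_lt hs
    have hsplit : ENNReal.ofReal (s ^ (p - 1)) =
        ENNReal.ofReal s ^ q * ENNReal.ofReal (s ^ (p - q - 1)) := by
      rw [ENNReal.ofReal_rpow_of_pos hs0, ← ENNReal.ofReal_mul (by positivity), ← Real.rpow_add hs0]
      ring_nf
    rw [hsplit, ← mul_assoc, mul_comm (μ _)]
    gcongr
    exact hweak s hs
  rw [lintegral_ofReal_rpow_eq_add hm hf hfm hp,
    lintegral_ofReal_rpow_eq_add hm hf hfm (sub_pos.2 hqp), measure_univ, one_mul]
  calc _ = ENNReal.ofReal (p - q) * ENNReal.ofReal (f ^ p) + ENNReal.ofReal p *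
        (ν univ * ENNReal.ofReal (f ^ (p - q)) + ENNReal.ofReal (p - q) *
          ∫⁻ s in Ioi f, μ {x | s < m x} * ENNReal.ofReal (s ^ (p - 1))) := by ring
    _ ≤ _ := by gcongr

theorem lintegral_rpow_mul_rpow_le {μ : Measure X} {g h : X → ℝ≥0∞} (hg : AEMeasurable g μ)
    (hh : AEMeasurable h μ) {p q : ℝ} (hq : 0 ≤ q) (hqp : q < p) :
    ∫⁻ x, g x ^ q * h x ^ (p - q) ∂μ ≤
      (∫⁻ x, g x ^ p ∂μ) ^ (q / p) * (∫⁻ x, h x ^ p ∂μ) ^ ((p - q) / p) := by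
  have hp : 0 < p := hq.trans_lt hqp
  have holder := ENNReal.lintegral_mul_norm_pow_le (hg.pow_const p) (hh.pow_const p)
    (div_nonneg hq hp.le) (div_nonneg (sub_nonneg.2 hqp.le) hp.le) (by field_simp; ring)
  simpa only [← ENNReal.rpow_mul, mul_div_cancel₀ _ hp.ne'] using holder

end LayerCake

noncomputable def hFun (p q t : ℝ) : ℝ := p * t ^ (p - q) - (p - q) * t ^ p

theorem hFun_strictAntiOn {p q : ℝ} (hq : 0 < q) (hqp : q < p) :
    StrictAntiOn (hFun p q) (Ici 1) := by
  refine strictAntiOn_of_deriv_neg (convex_Ici 1) ?_ fun x hx => ?_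
  · refine ContinuousOn.sub ?_ ?_ <;>
      exact continuousOn_const.mul (continuousOn_id.rpow_const fun x hx =>
        .inl (zero_lt_one.trans_le hx).ne')
  · rw [interior_Ici] at hx
    have hx1 : 1 < x := hx
    have hd : HasDerivAt (hFun p q)
        (p * ((p - q) * x ^ (p - q - 1)) - (p - q) * (p * x ^ (p - 1))) x :=
      ((Real.hasDerivAt_rpow_const (.inl (by positivity))).const_mul p).sub
        ((Real.hasDerivAt_rpow_const (.inl (by positivity))).const_mul (p - q))
    have hlt : x ^ (p - q - 1) < x ^ (p - 1) := Real.rpow_lt_rpow_of_exponent_lt hx1 (by linarith)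
    rw [hd.deriv]
    nlinarith [mul_pos (hq.trans hqp) (sub_pos.2 hqp)]

theorem le_mul_rpow_of_mul_hFun_le {p q F J t : ℝ} (hq : 0 < q) (hqp : q < p) (hF : 0 < F)
    (hJ : 0 ≤ J) (ht : 1 ≤ t)
    (h : F * hFun p q t ≤ p * (F ^ (q / p) * J ^ ((p - q) / p)) - (p - q) * J) :
    J ≤ F * t ^ p := by
  have hp : 0 < p := hq.trans hqp
  set s := (J / F) ^ p⁻¹
  have hs : 0 ≤ s := by positivity
  have hJs : J = F * s ^ p := by
    rw [← Real.rpow_mul (by positivity), inv_mul_cancel₀ hp.ne', Real.rpow_one,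
      mul_div_cancel₀ _ hF.ne']
  have hmix : F ^ (q / p) * J ^ ((p - q) / p) = F * s ^ (p - q) := by
    rw [hJs, Real.mul_rpow hF.le (by positivity), ← Real.rpow_mul hs, ← mul_assoc,
      ← Real.rpow_add hF, ← add_div, add_sub_cancel, div_self hp.ne', Real.rpow_one,
      mul_div_cancel₀ _ hp.ne']
  have hts : hFun p q t ≤ hFun p q s := by
    refine le_of_mul_le_mul_left ?_ hF
    rw [hmix, hJs] at h
    unfold hFun at h ⊢
    linarith
  rw [hJs]
  gcongr
  by_contra! hst
  exact (hFun_strictAntiOn hq hqp ht (ht.trans hst.le) hst).not_ge hts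

section Integrability

variable {X : Type*} [MeasurableSpace X] {μ : Measure X}

theorem integral_rpow_pos {φ : X → ℝ} {p : ℝ} (hφ : ∀ x, 0 ≤ φ x) (hint : Integrable φ μ)
    (hintp : Integrable (fun x => φ x ^ p) μ) (hp : p ≠ 0) (hpos : 0 < ∫ x, φ x ∂μ) :
    0 < ∫ x, φ x ^ p ∂μ := by
  have hsupp : Function.support (fun x => φ x ^ p) = Function.support φ := by
    ext x; simp [Real.rpow_eq_zero (hφ x) hp]
  rw [integral_pos_iff_support_of_nonneg (fun x => Real.rpow_nonneg (hφ x) p) hintp, hsupp,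
    ← integral_pos_iff_support_of_nonneg hφ hint]
  exact hpos

theorem MeasureTheory.Integrable.max_const_rpow [IsFiniteMeasure μ] {g : X → ℝ} {c p : ℝ}
    (hg : Integrable (fun x => g x ^ p) μ) (hgm : AEMeasurable g μ) (hg0 : ∀ x, 0 ≤ g x)
    (hc : 0 ≤ c) : Integrable (fun x => max (g x) c ^ p) μ := by
  refine (hg.add (integrable_const (c ^ p))).mono'
    ((hgm.max aemeasurable_const).pow_const p).aestronglyMeasurable (.of_forall fun x => ?_)
  rw [Real.norm_of_nonneg (Real.rpow_nonneg (hc.trans (le_max_right _ _)) p), Pi.add_apply]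
  rcases max_choice (g x) c with h | h <;> rw [h] <;>
    linarith [Real.rpow_nonneg (hg0 x) p, Real.rpow_nonneg hc p]

theorem lintegral_ofReal_abs_rpow {φ : X → ℝ} {r : ℝ} (hφ : ∀ x, 0 ≤ φ x) (hr : 0 ≤ r)
    (hint : Integrable (fun x => φ x ^ r) μ) :
    ∫⁻ x, ENNReal.ofReal |φ x| ^ r ∂μ = ENNReal.ofReal (∫ x, φ x ^ r ∂μ) := by
  rw [ofReal_integral_eq_lintegral_ofReal hint (.of_forall fun x => Real.rpow_nonneg (hφ x) r)]
  simp only [abs_of_nonneg (hφ _), ENNReal.ofReal_rpow_of_nonneg (hφ _) hr]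

end Integrability

theorem TreeStruct.mul_lintegral_rpow_max_maxOp_add_le {X : Type*} [MeasurableSpace X]
    {μ : Measure X} [IsProbabilityMeasure μ] (T : TreeStruct μ) {φ : X → ℝ} (hφ : Integrable φ μ)
    {f p q : ℝ} (hf : 0 ≤ f) (hq : 1 ≤ q) (hqp : q < p) :
    ENNReal.ofReal (p - q) * ∫⁻ x, ENNReal.ofReal (max (maxOp T φ x) f ^ p) ∂μ +
        ENNReal.ofReal p *
          ((∫⁻ x, ENNReal.ofReal |φ x| ^ q ∂μ) * ENNReal.ofReal (f ^ (p - q))) ≤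
      ENNReal.ofReal (p - q) * ENNReal.ofReal (f ^ p) + ENNReal.ofReal p *
        ((∫⁻ x, ENNReal.ofReal |φ x| ^ p ∂μ) ^ (q / p) *
          (∫⁻ x, ENNReal.ofReal (max (maxOp T φ x) f ^ p) ∂μ) ^ ((p - q) / p)) := by
  set m : X → ℝ := fun x => max (maxOp T φ x) f
  have hm : Measurable m := (measurable_maxOp hφ).max measurable_const
  have hm0 : ∀ x, 0 ≤ m x := fun x => hf.trans (le_max_right _ _)
  have hΦ : AEMeasurable (fun x => ENNReal.ofReal |φ x|) μ := hφ.abs.aemeasurable.ennreal_ofReal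
  have hweak : ∀ s, f < s → ENNReal.ofReal s ^ q * μ {x | s < m x} ≤
      μ.withDensity (fun x => ENNReal.ofReal |φ x| ^ q) {x | s < m x} := fun s hs => by
    simpa only [m, lt_max_iff, hs.not_gt, or_false] using
      rpow_mul_measure_lt_maxOp_le hφ hq (hf.trans hs.le)
  have hcomp := mul_lintegral_rpow_add_le_of_weak_type hm hf (fun x => le_max_right _ _)
    (zero_lt_one.trans (hq.trans_lt hqp)) hqp hweak
  rw [withDensity_apply _ .univ, Measure.restrict_univ,
    lintegral_withDensity_eq_lintegral_mul₀ (hΦ.pow_const q) (by fun_prop)] at hcomp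
  refine hcomp.trans ?_
  gcongr
  simpa only [Pi.mul_apply, ENNReal.ofReal_rpow_of_nonneg (hm0 _) (sub_pos.2 hqp).le,
    ENNReal.ofReal_rpow_of_nonneg (hm0 _) (zero_lt_one.trans (hq.trans_lt hqp)).le] using
    lintegral_rpow_mul_rpow_le hΦ hm.ennreal_ofReal.aemeasurable (zero_le_one.trans hq) hqp

theorem TreeStruct.mul_integral_rpow_max_maxOp_add_le {X : Type*} [MeasurableSpace X]
    {μ : Measure X} [IsProbabilityMeasure μ] (T : TreeStruct μ) {φ : X → ℝ} {f p q : ℝ}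
    (hφ : ∀ x, 0 ≤ φ x) (hint : Integrable φ μ) (hintq : Integrable (fun x => φ x ^ q) μ)
    (hintp : Integrable (fun x => φ x ^ p) μ)
    (hmp : Integrable (fun x => max (maxOp T φ x) f ^ p) μ) (hf : 0 ≤ f) (hq : 1 ≤ q)
    (hqp : q < p) :
    (p - q) * ∫ x, max (maxOp T φ x) f ^ p ∂μ + p * ((∫ x, φ x ^ q ∂μ) * f ^ (p - q)) ≤
      (p - q) * f ^ p + p * ((∫ x, φ x ^ p ∂μ) ^ (q / p) *
        (∫ x, max (maxOp T φ x) f ^ p ∂μ) ^ ((p - q) / p)) := by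
  have hq0 : 0 ≤ q := zero_le_one.trans hq
  have hp : 0 ≤ p := hq0.trans hqp.le
  have hqp' : 0 ≤ p - q := sub_nonneg.2 hqp.le
  have hm0 : ∀ x, 0 ≤ max (maxOp T φ x) f ^ p :=
    fun x => Real.rpow_nonneg (hf.trans (le_max_right _ _)) p
  have key := T.mul_lintegral_rpow_max_maxOp_add_le hint hf hq hqp
  rw [lintegral_ofReal_abs_rpow hφ hq0 hintq, lintegral_ofReal_abs_rpow hφ hp hintp,
    ← ofReal_integral_eq_lintegral_ofReal hmp (.of_forall hm0)] at key
  have hJ : 0 ≤ ∫ x, max (maxOp T φ x) f ^ p ∂μ := integral_nonneg hm0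
  have hA : 0 ≤ ∫ x, φ x ^ q ∂μ := integral_nonneg fun x => Real.rpow_nonneg (hφ x) q
  have hF : 0 ≤ ∫ x, φ x ^ p ∂μ := integral_nonneg fun x => Real.rpow_nonneg (hφ x) p
  rw [← ENNReal.ofReal_le_ofReal_iff (by positivity)]
  simpa (disch := positivity) only [ENNReal.ofReal_add, ENNReal.ofReal_mul,
    ENNReal.ofReal_rpow_of_nonneg] using key

theorem maximal_upper_bound_general {X : Type*} [MeasurableSpace X]
    (μ : Measure X) [IsProbabilityMeasure μ] (T : TreeStruct μ)
    (p q f A F : ℝ) (hq : 1 < q) (hqp : q < p)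
    (φ : X → ℝ) (hφ : ∀ x, 0 ≤ φ x) (hint : Integrable φ μ)
    (hintq : Integrable (fun x => φ x ^ q) μ)
    (hintp : Integrable (fun x => φ x ^ p) μ)
    (hMp : Integrable (fun x => maxOp T φ x ^ p) μ)
    (hf : ∫ x, φ x ∂μ = f) (hA : ∫ x, φ x ^ q ∂μ = A)
    (hF : ∫ x, φ x ^ p ∂μ = F) (hf0 : 0 < f) :
    ∀ t : ℝ, 1 ≤ t →
      p * t ^ (p - q) - (p - q) * t ^ p =
        (p * f ^ (p - q) * A - (p - q) * f ^ p) / F →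
      ∫ x, maxOp T φ x ^ p ∂μ ≤ F * t ^ p := by
  intro t ht hteq
  have hp : 0 < p := by linarith
  have hF0 : 0 < F := hF ▸ integral_rpow_pos hφ hint hintp hp.ne' (hf ▸ hf0)
  have hmp := hMp.max_const_rpow (measurable_maxOp hint).aemeasurable (maxOp_nonneg T φ) hf0.le
  have key := T.mul_integral_rpow_max_maxOp_add_le hφ hint hintq hintp hmp hf0.le hq.le hqp
  rw [hA, hF] at key
  calc ∫ x, maxOp T φ x ^ p ∂μ ≤ ∫ x, max (maxOp T φ x) f ^ p ∂μ :=
        integral_mono hMp hmp fun x =>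
          Real.rpow_le_rpow (maxOp_nonneg T φ x) (le_max_left _ _) hp.le
    _ ≤ F * t ^ p := by
        refine le_mul_rpow_of_mul_hFun_le (by linarith) hqp hF0
          (integral_nonneg fun x => Real.rpow_nonneg (hf0.le.trans (le_max_right _ _)) p) ht ?_
        rw [hFun, hteq, mul_div_cancel₀ _ hF0.ne']
        linarith

/-- Lemma 4.2: for `1 < q < p` and `φ ≥ 0` in `L^p` with `∫φ = f`, `∫φ^q = A`,
`∫φ^p = F` and `∫ (ℳ_𝒯 φ)^p dμ` finite, one has
`∫ (ℳ_𝒯 φ)^p dμ ≤ F (h⁻¹((p f^{p-q} A - (p-q) f^p)/F))^p`, i.e. for the unique `t ≥ 1`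
with `h(t) = p t^{p-q} - (p-q) t^p = (p f^{p-q} A - (p-q) f^p)/F` one has
`∫ (ℳ_𝒯 φ)^p dμ ≤ F t^p`. -/
theorem maximal_upper_bound {X : Type*} [MeasurableSpace X]
    (μ : Measure X) [IsProbabilityMeasure μ] [NullSingletonClass μ] (T : TreeStruct μ)
    (p q f A F : ℝ) (hq : 1 < q) (hqp : q < p)
    (φ : X → ℝ) (hφ : ∀ x, 0 ≤ φ x) (hint : Integrable φ μ)
    (hintq : Integrable (fun x => φ x ^ q) μ)
    (hintp : Integrable (fun x => φ x ^ p) μ)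
    (hMp : Integrable (fun x => maxOp T φ x ^ p) μ)
    (hf : ∫ x, φ x ∂μ = f) (hA : ∫ x, φ x ^ q ∂μ = A)
    (hF : ∫ x, φ x ^ p ∂μ = F) (hf0 : 0 < f) :
    ∀ t : ℝ, 1 ≤ t →
      p * t ^ (p - q) - (p - q) * t ^ p =
        (p * f ^ (p - q) * A - (p - q) * f ^ p) / F →
      ∫ x, maxOp T φ x ^ p ∂μ ≤ F * t ^ p :=
  maximal_upper_bound_general μ T p q f A F hq hqp φ hφ hint hintq hintp hMp hf hA hF hf0
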